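/- Let p be a gauge with constant c_p and let T be a bounded operator on a Hilbert space with ‖T^n‖ ≤ p(n) for all n, such that the sequence ‖T^n‖/p(n) does not almost converge to 0. Then the spectral radius of T equals c_p. -/

import Mathlib

noncomputable section

/-- A complex sequence is bounded. -/
def IsBoundedSeq (u : ℕ → ℂ) : Prop := ∃ C : ℝ, ∀ n, ‖u n‖ ≤ C

/-- Almost convergence (Lorentz) of a complex sequence: the Cesàro averages
`(1/(n+1)) ∑_{i=k}^{k+n} u i` converge to `c` uniformly in `k`. -/
def AlmostConvergentC (u : ℕ → ℂ) (c : ℂ) : Prop :=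
  ∀ ε : ℝ, 0 < ε → ∃ N : ℕ, ∀ n ≥ N, ∀ k : ℕ,
    ‖(∑ i ∈ Finset.range (n + 1), u (k + i)) / ((n : ℂ) + 1) - c‖ < ε

/-- Almost convergence (Lorentz) of a real sequence. -/
def AlmostConvergentR (u : ℕ → ℝ) (c : ℝ) : Prop :=
  ∀ ε : ℝ, 0 < ε → ∃ N : ℕ, ∀ n ≥ N, ∀ k : ℕ,
    |(∑ i ∈ Finset.range (n + 1), u (k + i)) / ((n : ℝ) + 1) - c| < ε

/-- A Banach limit: a shift-invariant positive linear functional on `ℓ^∞(ℕ, ℂ)`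
with `L(1) = 1 = ‖L‖`. -/
structure BanachLimit where
  toFun : (ℕ → ℂ) → ℂ
  map_add' : ∀ u v : ℕ → ℂ, IsBoundedSeq u → IsBoundedSeq v →
    toFun (u + v) = toFun u + toFun v
  map_smul' : ∀ (a : ℂ) (u : ℕ → ℂ), IsBoundedSeq u → toFun (a • u) = a * toFun u
  norm_le' : ∀ (u : ℕ → ℂ) (C : ℝ), (∀ n, ‖u n‖ ≤ C) → ‖toFun u‖ ≤ C
  map_one' : toFun (fun _ => 1) = 1
  shift' : ∀ u : ℕ → ℂ, IsBoundedSeq u → toFun (fun n => u (n + 1)) = toFun u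
  pos' : ∀ u : ℕ → ℂ, (∀ n, ∃ r : ℝ, 0 ≤ r ∧ u n = (r : ℂ)) →
    ∃ r : ℝ, 0 ≤ r ∧ toFun u = (r : ℂ)

/-- A gauge with constant `c`: `p : ℕ → (0,∞)` with `p(n+1)/p(n)` strongly almost
convergent to `c > 0`. -/
def IsGauge (p : ℕ → ℝ) (c : ℝ) : Prop :=
  (∀ n, 0 < p n) ∧ 0 < c ∧ AlmostConvergentR (fun n => |p (n + 1) / p n - c|) 0

/-! Write `r(T)` for the spectral radius and `M` for a bound of `‖T^n‖ / p(n)`.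

The ratios `p(j+1)/p(j)` exceed `c` on average by `o(1)`, so `p(n) ≤ c'^n` eventually for every
`c' > c`; Gelfand's formula and `‖T^n‖ ≤ p(n)` then give `r(T) ≤ c`.

If `r(T) < t < c`, then `‖T^G‖ ≤ t^G` for large `G`. When the ratios on a window `[s, s + G)`
deviate from `c` by at most `c/2` in total, the Weierstrass product inequality gives
`p(s+G) ≥ p(s) c^G / 2`, hence `‖T^(s+G)‖ / p(s+G) ≤ ‖T^s‖ ‖T^G‖ / p(s+G) ≤ 2M (t/c)^G`. On the
other windows `‖T^(s+G)‖ / p(s+G) ≤ M` is at most `2M/c` times the total deviation, which almost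
converges to `0` in `s` because `p` is a gauge. So `‖T^n‖/p(n)` would almost converge to `0`. -/

open Filter Finset Topology

section AlmostConvergence

variable {u v : ℕ → ℝ} {c d : ℝ}

theorem almostConvergentR_const (c : ℝ) : AlmostConvergentR (fun _ => c) c := fun ε hε =>
  ⟨0, fun n _ k => by
    rw [sum_const, card_range, nsmul_eq_mul]
    push_cast
    rw [mul_div_cancel_left₀ _ (by positivity), sub_self, abs_zero]
    exact hε⟩

theorem AlmostConvergentR.comp_add (h : AlmostConvergentR u c) (j : ℕ) :
    AlmostConvergentR (fun n => u (n + j)) c := fun ε hε => by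
  obtain ⟨N, hN⟩ := h ε hε
  refine ⟨N, fun n hn k => ?_⟩
  simpa only [add_right_comm] using hN n hn (k + j)

theorem AlmostConvergentR.add (hu : AlmostConvergentR u c) (hv : AlmostConvergentR v d) :
    AlmostConvergentR (fun n => u n + v n) (c + d) := fun ε hε => by
  obtain ⟨N₁, h₁⟩ := hu (ε / 2) (half_pos hε)
  obtain ⟨N₂, h₂⟩ := hv (ε / 2) (half_pos hε)
  refine ⟨max N₁ N₂, fun n hn k => ?_⟩
  have hu' := abs_lt.1 (h₁ n (le_of_max_le_left hn) k)
  have hv' := abs_lt.1 (h₂ n (le_of_max_le_right hn) k)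
  rw [sum_add_distrib, add_div, abs_lt]
  constructor <;> linarith

theorem AlmostConvergentR.const_mul (h : AlmostConvergentR u c) (a : ℝ) :
    AlmostConvergentR (fun n => a * u n) (a * c) := fun ε hε => by
  obtain ⟨N, hN⟩ := h (ε / (|a| + 1)) (by positivity)
  refine ⟨N, fun n hn k => ?_⟩
  rw [← mul_sum, mul_div_assoc, ← mul_sub, abs_mul]
  calc |a| * |(∑ i ∈ range (n + 1), u (k + i)) / ((n : ℝ) + 1) - c|
      ≤ |a| * (ε / (|a| + 1)) := by gcongr; exact (hN n hn k).le
    _ < ε := by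
      rw [← mul_div_assoc, div_lt_iff₀ (by positivity)]
      nlinarith [abs_nonneg a]

theorem AlmostConvergentR.sum {ι : Type*} (s : Finset ι) {u : ι → ℕ → ℝ} {c : ι → ℝ}
    (h : ∀ i ∈ s, AlmostConvergentR (u i) (c i)) :
    AlmostConvergentR (fun n => ∑ i ∈ s, u i n) (∑ i ∈ s, c i) := by
  classical
  induction s using Finset.induction_on with
  | empty => simpa using almostConvergentR_const 0
  | insert i s hi ih =>
    simp only [sum_insert hi]
    exact (h i (mem_insert_self i s)).add (ih fun j hj => h j (mem_insert_of_mem hj))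

theorem AlmostConvergentR.eventually_sum_range_le (h : AlmostConvergentR u c) {ε : ℝ}
    (hε : 0 < ε) : ∀ᶠ n in atTop, ∑ i ∈ range n, u i ≤ (c + ε) * n := by
  obtain ⟨N, hN⟩ := h ε hε
  filter_upwards [eventually_gt_atTop N] with n hn
  obtain ⟨m, rfl⟩ : ∃ m, n = m + 1 := ⟨n - 1, by omega⟩
  have hm := (abs_lt.1 (hN m (by omega) 0)).2
  simp only [zero_add] at hm
  rw [sub_lt_iff_lt_add, div_lt_iff₀ (by positivity)] at hm
  push_cast
  linarith

theorem almostConvergentR_zero_of_forall_comp_add_le {a : ℕ → ℝ} {M : ℝ}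
    (ha : ∀ n, 0 ≤ a n) (haM : ∀ n, a n ≤ M)
    (h : ∀ ε > 0, ∃ j : ℕ, ∃ b : ℕ → ℝ, AlmostConvergentR b 0 ∧ ∀ n, a (n + j) ≤ ε + b n) :
    AlmostConvergentR a 0 := by
  intro ε hε
  obtain ⟨j, b, hb, hab⟩ := h (ε / 3) (by positivity)
  obtain ⟨N, hN⟩ := hb (ε / 3) (by positivity)
  obtain ⟨N', hN'⟩ := exists_nat_gt (3 * j * M / ε)
  refine ⟨max N N', fun n hn k => ?_⟩
  have hn1 : (0 : ℝ) < n + 1 := by positivity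
  have hhead : ∑ i ∈ range j, a (k + i) ≤ j * M := by
    simpa using sum_le_sum fun i (_ : i ∈ range j) => haM (k + i)
  have htail : ∑ i ∈ range (n + 1), a (k + j + i) ≤
      (n + 1) * (ε / 3) + ∑ i ∈ range (n + 1), b (k + i) := by
    have := sum_le_sum fun i (_ : i ∈ range (n + 1)) => hab (k + i)
    simpa [sum_add_distrib, add_right_comm] using this
  have hbsum : ∑ i ∈ range (n + 1), b (k + i) < (n + 1) * (ε / 3) := by
    have := (abs_lt.1 (hN n (le_of_max_le_left hn) k)).2
    rwa [sub_zero, div_lt_iff₀ hn1, mul_comm] at this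
  have hjM : j * M < (n + 1) * (ε / 3) := by
    have : (N' : ℝ) ≤ n := by exact_mod_cast le_of_max_le_right hn
    rw [div_lt_iff₀ hε] at hN'
    nlinarith
  have hsplit : ∑ i ∈ range (n + 1), a (k + i) ≤
      ∑ i ∈ range j, a (k + i) + ∑ i ∈ range (n + 1), a (k + j + i) := by
    calc ∑ i ∈ range (n + 1), a (k + i) ≤ ∑ i ∈ range (j + (n + 1)), a (k + i) :=
          sum_le_sum_of_subset_of_nonneg (range_mono (by omega)) fun i _ _ => ha _
      _ = _ := by rw [sum_range_add]; simp only [add_assoc]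
  rw [sub_zero, abs_of_nonneg (div_nonneg (sum_nonneg fun i _ => ha _) hn1.le),
    div_lt_iff₀ hn1]
  linarith

end AlmostConvergence

theorem mul_prod_range_div {G₀ : Type*} [CommGroupWithZero G₀] {f : ℕ → G₀}
    (hf : ∀ n, f n ≠ 0) (k n : ℕ) :
    f k * ∏ i ∈ range n, f (k + i + 1) / f (k + i) = f (k + n) := by
  induction n with
  | zero => simp
  | succ n ih => rw [prod_range_succ, ← mul_assoc, ih, mul_div_cancel₀ _ (hf _), add_assoc]

theorem one_sub_sum_le_prod_one_sub {ι R : Type*} [CommRing R] [LinearOrder R]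
    [IsStrictOrderedRing R] (s : Finset ι) {x : ι → R} (h0 : ∀ i ∈ s, 0 ≤ x i)
    (h1 : ∀ i ∈ s, x i ≤ 1) : 1 - ∑ i ∈ s, x i ≤ ∏ i ∈ s, (1 - x i) := by
  classical
  induction s using Finset.induction_on with
  | empty => simp
  | insert i s hi ih =>
    rw [sum_insert hi, prod_insert hi]
    have hs := ih (fun j hj => h0 j (mem_insert_of_mem hj))
      fun j hj => h1 j (mem_insert_of_mem hj)
    have hxi := h0 i (mem_insert_self i s)
    have hsum : 0 ≤ ∑ j ∈ s, x j := sum_nonneg fun j hj => h0 j (mem_insert_of_mem hj)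
    nlinarith [mul_le_mul_of_nonneg_left hs (sub_nonneg.2 (h1 i (mem_insert_self i s))),
      mul_nonneg hxi hsum]

section ProductsNearConstant

variable {ι : Type*} (s : Finset ι) {x : ι → ℝ} {c : ℝ}

theorem prod_le_pow_mul_exp_sum (hc : 0 < c) (hx : ∀ i ∈ s, 0 ≤ x i) :
    ∏ i ∈ s, x i ≤ c ^ #s * Real.exp ((∑ i ∈ s, |x i - c|) / c) :=
  calc ∏ i ∈ s, x i ≤ ∏ i ∈ s, c * (1 + |x i - c| / c) := by
        refine prod_le_prod hx fun i _ => ?_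
        rw [mul_add, mul_one, mul_div_cancel₀ _ hc.ne']
        linarith [le_abs_self (x i - c)]
    _ = c ^ #s * ∏ i ∈ s, (1 + |x i - c| / c) := by rw [prod_mul_distrib, prod_const]
    _ ≤ c ^ #s * Real.exp ((∑ i ∈ s, |x i - c|) / c) := by
        rw [sum_div]
        gcongr
        exact Real.prod_one_add_le_exp_sum s fun i => by positivity

theorem pow_mul_one_sub_sum_le_prod (hc : 0 < c) (hx : ∀ i ∈ s, |x i - c| ≤ c) :
    c ^ #s * (1 - (∑ i ∈ s, |x i - c|) / c) ≤ ∏ i ∈ s, x i :=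
  calc c ^ #s * (1 - (∑ i ∈ s, |x i - c|) / c)
        ≤ c ^ #s * ∏ i ∈ s, (1 - |x i - c| / c) := by
        rw [sum_div]
        gcongr
        exact one_sub_sum_le_prod_one_sub s (fun i _ => by positivity)
          fun i hi => (div_le_one hc).2 (hx i hi)
    _ = ∏ i ∈ s, c * (1 - |x i - c| / c) := by rw [prod_mul_distrib, prod_const]
    _ ≤ ∏ i ∈ s, x i := by
        refine prod_le_prod (fun i hi => ?_) fun i _ => ?_
        · exact mul_nonneg hc.le (sub_nonneg.2 ((div_le_one hc).2 (hx i hi)))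
        · rw [mul_sub, mul_one, mul_div_cancel₀ _ hc.ne']
          linarith [neg_abs_le (x i - c)]

end ProductsNearConstant

theorem exists_norm_pow_le_mul {A : Type*} [NormedRing A] {a : A} {p : ℕ → ℝ}
    (hp : ∀ n, 0 < p n) (h : ∀ n, 1 ≤ n → ‖a ^ n‖ ≤ p n) : ∃ M, ∀ n, ‖a ^ n‖ ≤ M * p n := by
  refine ⟨max 1 (‖a ^ 0‖ / p 0), fun n => ?_⟩
  rcases n.eq_zero_or_pos with rfl | hn
  · rw [← div_le_iff₀ (hp 0)]
    exact le_max_right _ _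
  · exact (h n hn).trans (le_mul_of_one_le_left (hp n).le (le_max_left _ _))

namespace IsGauge

variable {p : ℕ → ℝ} {c : ℝ}

theorem eventually_le_mul_pow (hp : IsGauge p c) {c' : ℝ} (hc' : c < c') :
    ∀ᶠ n in atTop, p n ≤ p 0 * c' ^ n := by
  obtain ⟨hp0, hc, he⟩ := hp
  have hlog : 0 < c * Real.log (c' / c) := mul_pos hc (Real.log_pos ((one_lt_div hc).2 hc'))
  filter_upwards [he.eventually_sum_range_le hlog] with n hn
  calc p n = p 0 * ∏ i ∈ range n, p (i + 1) / p i := by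
        simpa using (mul_prod_range_div (fun n => (hp0 n).ne') 0 n).symm
    _ ≤ p 0 * (c ^ n * Real.exp ((∑ i ∈ range n, |p (i + 1) / p i - c|) / c)) := by
        refine mul_le_mul_of_nonneg_left ?_ (hp0 0).le
        simpa only [card_range] using prod_le_pow_mul_exp_sum (x := fun i => p (i + 1) / p i)
          (range n) hc fun i _ => (div_pos (hp0 _) (hp0 i)).le
    _ ≤ p 0 * (c ^ n * Real.exp (n * Real.log (c' / c))) := by
        refine mul_le_mul_of_nonneg_left ?_ (hp0 0).le
        gcongr
        rw [div_le_iff₀ hc]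
        linarith
    _ = p 0 * c' ^ n := by
        rw [Real.exp_nat_mul, Real.exp_log (div_pos (hc.trans hc') hc), ← mul_pow,
          mul_div_cancel₀ _ hc.ne']

theorem eventually_le_pow (hp : IsGauge p c) {c' : ℝ} (hc' : c < c') :
    ∀ᶠ n in atTop, p n ≤ c' ^ n := by
  obtain ⟨c₁, hc₁, hc₁'⟩ := exists_between hc'
  have hc₁0 : 0 < c₁ := hp.2.1.trans hc₁
  have hgrow : Tendsto (fun n => (c' / c₁) ^ n) atTop atTop :=
    tendsto_pow_atTop_atTop_of_one_lt ((one_lt_div hc₁0).2 hc₁')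
  filter_upwards [hp.eventually_le_mul_pow hc₁, hgrow.eventually_ge_atTop (p 0)] with n hn hn'
  calc p n ≤ p 0 * c₁ ^ n := hn
    _ ≤ (c' / c₁) ^ n * c₁ ^ n := by gcongr
    _ = c' ^ n := by rw [← mul_pow, div_mul_cancel₀ _ hc₁0.ne']

theorem mul_pow_le_two_mul (hp : IsGauge p c) {s G : ℕ}
    (hS : ∑ i ∈ range G, |p (s + i + 1) / p (s + i) - c| ≤ c / 2) :
    p s * c ^ G ≤ 2 * p (s + G) := by
  obtain ⟨hp0, hc, -⟩ := hp
  have hterm : ∀ i ∈ range G, |p (s + i + 1) / p (s + i) - c| ≤ c := fun i hi =>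
    (single_le_sum (fun j _ => abs_nonneg (p (s + j + 1) / p (s + j) - c)) hi).trans (by linarith)
  have hhalf : (∑ i ∈ range G, |p (s + i + 1) / p (s + i) - c|) / c ≤ 1 / 2 := by
    rw [div_le_iff₀ hc]
    linarith
  rw [← mul_prod_range_div (fun n => (hp0 n).ne') s G]
  calc p s * c ^ G = 2 * (p s * (c ^ G * (1 / 2))) := by ring
    _ ≤ 2 * (p s * (c ^ G * (1 - (∑ i ∈ range G, |p (s + i + 1) / p (s + i) - c|) / c))) := by
        gcongr 2 * (p s * (c ^ G * ?_))
        · exact (hp0 s).le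
        · linarith
    _ ≤ 2 * (p s * ∏ i ∈ range G, p (s + i + 1) / p (s + i)) := by
        refine mul_le_mul_of_nonneg_left (mul_le_mul_of_nonneg_left ?_ (hp0 s).le) zero_le_two
        simpa only [card_range] using pow_mul_one_sub_sum_le_prod
          (x := fun i => p (s + i + 1) / p (s + i)) (range G) hc hterm

variable {A : Type*} [NormedRing A] {a : A} {M t : ℝ}

theorem norm_pow_add_div_le (hp : IsGauge p c) (hM : ∀ n, ‖a ^ n‖ ≤ M * p n) (ht0 : 0 ≤ t)
    {G : ℕ} (hG : ‖a ^ G‖ ≤ t ^ G) (s : ℕ) :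
    ‖a ^ (s + G)‖ / p (s + G) ≤
      2 * M * (t / c) ^ G + 2 * M / c * ∑ i ∈ range G, |p (s + i + 1) / p (s + i) - c| := by
  have hp0 := hp.1
  have hc := hp.2.1
  set S := ∑ i ∈ range G, |p (s + i + 1) / p (s + i) - c|
  have hM0 : 0 ≤ M := nonneg_of_mul_nonneg_left ((norm_nonneg _).trans (hM 0)) (hp0 0)
  rcases le_or_gt S (c / 2) with hgood | hbad
  · have hnum : ‖a ^ (s + G)‖ ≤ M * p s * t ^ G :=
      calc ‖a ^ (s + G)‖ ≤ ‖a ^ s‖ * ‖a ^ G‖ := by rw [pow_add]; exact norm_mul_le _ _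
        _ ≤ M * p s * t ^ G := mul_le_mul (hM s) hG (norm_nonneg _) (mul_nonneg hM0 (hp0 s).le)
    have hden := hp.mul_pow_le_two_mul hgood
    refine le_add_of_le_of_nonneg ?_ (by positivity)
    rw [div_le_iff₀ (hp0 _), div_pow]
    calc ‖a ^ (s + G)‖ ≤ M * p s * t ^ G := hnum
      _ = M * t ^ G / c ^ G * (p s * c ^ G) := by field_simp
      _ ≤ M * t ^ G / c ^ G * (2 * p (s + G)) := by gcongr
      _ = 2 * M * (t ^ G / c ^ G) * p (s + G) := by ring
  · refine le_add_of_nonneg_of_le (by positivity) ?_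
    calc ‖a ^ (s + G)‖ / p (s + G) ≤ M := div_le_of_le_mul₀ (hp0 _).le hM0 (hM _)
      _ = 2 * M / c * (c / 2) := by field_simp
      _ ≤ 2 * M / c * S := by gcongr

theorem almostConvergentR_norm_pow_div (hp : IsGauge p c) (hM : ∀ n, ‖a ^ n‖ ≤ M * p n)
    (ht0 : 0 ≤ t) (htc : t < c) (ht : ∀ᶠ n in atTop, ‖a ^ n‖ ≤ t ^ n) :
    AlmostConvergentR (fun n => ‖a ^ n‖ / p n) 0 := by
  have hM0 : 0 ≤ M := nonneg_of_mul_nonneg_left ((norm_nonneg _).trans (hM 0)) (hp.1 0)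
  refine almostConvergentR_zero_of_forall_comp_add_le (M := M)
    (fun n => div_nonneg (norm_nonneg _) (hp.1 n).le)
    (fun n => div_le_of_le_mul₀ (hp.1 n).le hM0 (hM n)) fun ε hε => ?_
  have hsmall : Tendsto (fun G => 2 * M * (t / c) ^ G) atTop (𝓝 0) := by
    simpa using (tendsto_pow_atTop_nhds_zero_of_lt_one (div_nonneg ht0 hp.2.1.le)
      ((div_lt_one hp.2.1).2 htc)).const_mul (2 * M)
  obtain ⟨G, hG, hGε⟩ := (ht.and (hsmall.eventually (ge_mem_nhds hε))).exists
  refine ⟨G, fun s => 2 * M / c * ∑ i ∈ range G, |p (s + i + 1) / p (s + i) - c|, ?_,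
    fun s => (hp.norm_pow_add_div_le hM ht0 hG s).trans (add_le_add_left hGε _)⟩
  simpa using (AlmostConvergentR.sum (range G) fun i _ => hp.2.2.comp_add i).const_mul (2 * M / c)

end IsGauge

section SpectralRadius

variable {A : Type*} [NormedRing A] [NormedAlgebra ℂ A] [CompleteSpace A] (a : A)

theorem spectralRadius_le_ofReal_of_eventually_norm_pow_le {r : ℝ} (hr : 0 ≤ r)
    (h : ∀ r' > r, ∀ᶠ n in atTop, ‖a ^ n‖ ≤ r' ^ n) : spectralRadius ℂ a ≤ ENNReal.ofReal r := by
  refine ENNReal.le_of_forall_pos_le_add fun ε hε _ => ?_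
  have hrε : r < r + ε := lt_add_of_pos_right r hε
  rw [← ENNReal.ofReal_coe_nnreal, ← ENNReal.ofReal_add hr ε.coe_nonneg]
  refine le_of_tendsto (spectrum.pow_norm_pow_one_div_tendsto_nhds_spectralRadius a) ?_
  filter_upwards [h _ hrε, eventually_ne_atTop 0] with n hn hn0
  refine ENNReal.ofReal_le_ofReal ?_
  calc ‖a ^ n‖ ^ (1 / (n : ℝ)) ≤ ((r + ε) ^ n) ^ (1 / (n : ℝ)) := by gcongr
    _ = r + ε := by rw [one_div, Real.pow_rpow_inv_natCast (by positivity) hn0]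

theorem eventually_norm_pow_le_of_spectralRadius_lt {t : ℝ}
    (h : spectralRadius ℂ a < ENNReal.ofReal t) : ∀ᶠ n in atTop, ‖a ^ n‖ ≤ t ^ n := by
  have hgelfand := spectrum.pow_norm_pow_one_div_tendsto_nhds_spectralRadius a
  filter_upwards [hgelfand.eventually_lt_const h, eventually_ne_atTop 0] with n hn hn0
  have hroot := (ENNReal.ofReal_lt_ofReal_iff'.1 hn).1
  calc ‖a ^ n‖ = (‖a ^ n‖ ^ (1 / (n : ℝ))) ^ n := by
        rw [one_div, Real.rpow_inv_natCast_pow (norm_nonneg _) hn0]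
    _ ≤ t ^ n := pow_le_pow_left₀ (by positivity) hroot.le n

end SpectralRadius

/-- An operator on a Hilbert space compatible with a gauge `p` (dominated by `p`
and `‖T^n‖/p(n)` does not almost converge to `0`) has spectral radius `c_p`. -/
theorem spectralRadius_eq_gauge_const
    {H : Type*} [NormedAddCommGroup H] [InnerProductSpace ℂ H] [CompleteSpace H]
    (p : ℕ → ℝ) (c : ℝ) (hp : IsGauge p c)
    (T : H →L[ℂ] H) (hdom : ∀ n : ℕ, 1 ≤ n → ‖T ^ n‖ ≤ p n)
    (hcompat : ¬ AlmostConvergentR (fun n => ‖T ^ n‖ / p n) 0) :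
    spectralRadius ℂ T = ENNReal.ofReal c := by
  refine le_antisymm (spectralRadius_le_ofReal_of_eventually_norm_pow_le T hp.2.1.le
    fun c' hc' => ?_) (not_lt.1 fun hlt => ?_)
  · filter_upwards [hp.eventually_le_pow hc', eventually_ge_atTop 1] with n hpn hn
    exact (hdom n hn).trans hpn
  · obtain ⟨t, ht0, hρt, htc⟩ := ENNReal.lt_iff_exists_real_btwn.1 hlt
    obtain ⟨M, hM⟩ := exists_norm_pow_le_mul hp.1 hdom
    exact hcompat (hp.almostConvergentR_norm_pow_div hM ht0
      ((ENNReal.ofReal_lt_ofReal_iff hp.2.1).1 htc)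
      (eventually_norm_pow_le_of_spectralRadius_lt T hρt))
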